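/- arXiv:2009.13891 — 2 statements merged into one kernel-verified Lean document; each statement's English description precedes it below -/
import Mathlib

section
/- Let X and Y be nonempty finite types and let p : X × Y → ℝ be a probability mass function with p(x,y) > 0 for all (x,y), with marginals p_X, p_Y, mutual information I(X;Y) = Σ_{(x,y)} p(x,y) · log( p(x,y) / (p_X(x)·p_Y(y)) ), and optimal critic g(x,y) = p(x,y)/(p_X(x)·p_Y(y)). Fix an integer W ≥ 2 and define L_upper = − Σ_{x,y⁺} p(x,y⁺) Σ_{y₁,…,y_{W−1}} (∏_{j=1}^{W−1} p_Y(y_j)) · log( g(x,y⁺) / Σ_{j=1}^{W−1} g(x,y_j) ). Then the sharper bound L_upper ≤ −I(X;Y) + log(W−1) holds, i.e. I(X;Y) ≤ log(W−1) − L_upper. -/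
/-!
Write `S_x(ys) = ∑ⱼ g(x, ysⱼ)` for the denominator of the loss. Since the numerator `g(x, y⁺)` does
not depend on the negatives, `-L_upper = I - ∑ₓ p_X(x) 𝔼[log S_x]`, the expectation being over
`W - 1` i.i.d. samples from `p_Y`. Each negative contributes `𝔼[g(x, y)] = ∑_y p(x, y) / p_X(x) = 1`,
so `𝔼[S_x] = W - 1`, and Jensen's inequality for the concave logarithm gives
`𝔼[log S_x] ≤ log (W - 1)`.
-/

open Finset Real

section WeightedSums

variable {Z : Type*} [Fintype Z] (q S : Z → ℝ)

theorem sum_mul_le_of_forall_le (f : Z → ℝ) {c : ℝ} (hq0 : ∀ z, 0 ≤ q z) (hq1 : ∑ z, q z = 1)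
    (hf : ∀ z, f z ≤ c) : ∑ z, q z * f z ≤ c :=
  calc ∑ z, q z * f z ≤ ∑ z, q z * c :=
        sum_le_sum fun z _ => mul_le_mul_of_nonneg_left (hf z) (hq0 z)
    _ = c := by rw [← sum_mul, hq1, one_mul]

theorem sum_mul_log_le_log_sum_mul (hq0 : ∀ z, 0 ≤ q z) (hq1 : ∑ z, q z = 1)
    (hS : ∀ z, 0 < S z) : ∑ z, q z * log (S z) ≤ log (∑ z, q z * S z) :=
  strictConcaveOn_log_Ioi.concaveOn.le_map_sum (fun z _ => hq0 z) hq1 fun z _ => hS z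

theorem sum_mul_log_div {a : ℝ} (hq1 : ∑ z, q z = 1) (ha : 0 < a) (hS : ∀ z, 0 < S z) :
    ∑ z, q z * log (a / S z) = log a - ∑ z, q z * log (S z) := by
  simp only [log_div ha.ne' (hS _).ne', mul_sub, sum_sub_distrib, ← sum_mul, hq1, one_mul]

end WeightedSums

section ProductWeights

variable {Y ι : Type*} [Fintype Y] [Fintype ι] [DecidableEq ι] (w : Y → ℝ)

theorem sum_pi_prod_eq_one (hw : ∑ y, w y = 1) : ∑ ys : ι → Y, ∏ i, w (ys i) = 1 := by
  rw [← Fintype.prod_sum (fun (_ : ι) y => w y), hw, prod_const_one]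

theorem sum_pi_prod_mul_apply (hw : ∑ y, w y = 1) (f : Y → ℝ) (j : ι) :
    ∑ ys : ι → Y, (∏ i, w (ys i)) * f (ys j) = ∑ y, w y * f y := by
  have hterm : ∀ ys : ι → Y,
      (∏ i, w (ys i)) * f (ys j) = ∏ i, w (ys i) * if i = j then f (ys i) else 1 := fun ys => by
    rw [prod_mul_distrib, Fintype.prod_ite_eq']
  have hfactor : ∀ i, ∑ y, w y * (if i = j then f y else 1) =
      if i = j then ∑ y, w y * f y else 1 := fun i => by
    split_ifs <;> simp [hw]
  simp only [hterm, ← Fintype.prod_sum (fun i y => w y * if i = j then f y else 1), hfactor,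
    Fintype.prod_ite_eq']

theorem sum_pi_prod_mul_sum_apply (hw : ∑ y, w y = 1) (f : Y → ℝ) :
    ∑ ys : ι → Y, (∏ i, w (ys i)) * ∑ j, f (ys j) = Fintype.card ι * ∑ y, w y * f y := by
  calc ∑ ys : ι → Y, (∏ i, w (ys i)) * ∑ j, f (ys j)
      = ∑ j, ∑ ys : ι → Y, (∏ i, w (ys i)) * f (ys j) := by simp only [mul_sum]; exact sum_comm
    _ = Fintype.card ι * ∑ y, w y * f y := by
      simp only [sum_pi_prod_mul_apply w hw, sum_const, card_univ, nsmul_eq_mul]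

theorem sum_pi_prod_mul_log_sum_le [Nonempty ι] (hw0 : ∀ y, 0 ≤ w y) (hw : ∑ y, w y = 1)
    {f : Y → ℝ} (hf : ∀ y, 0 < f y) :
    ∑ ys : ι → Y, (∏ i, w (ys i)) * log (∑ j, f (ys j)) ≤
      log (Fintype.card ι * ∑ y, w y * f y) := by
  rw [← sum_pi_prod_mul_sum_apply w hw f]
  exact sum_mul_log_le_log_sum_mul _ _ (fun ys => prod_nonneg fun i _ => hw0 _)
    (sum_pi_prod_eq_one w hw) fun ys => sum_pos (fun j _ => hf _) univ_nonempty

end ProductWeights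

theorem sum_mul_density_ratio_eq_one {X Y : Type*} [Fintype Y] (p : X × Y → ℝ) (pX : X → ℝ)
    (pY : Y → ℝ) (x : X) (hpX : pX x = ∑ y, p (x, y)) (hpX_ne : pX x ≠ 0)
    (hpY_ne : ∀ y, pY y ≠ 0) : ∑ y, pY y * (p (x, y) / (pX x * pY y)) = 1 := by
  have hterm : ∀ y, pY y * (p (x, y) / (pX x * pY y)) = p (x, y) / pX x := fun y => by
    field_simp [hpY_ne y]
  simp only [hterm, ← sum_div, ← hpX, div_self hpX_ne]

/-- sharper intermediate bound in the proof of Proposition 1: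
with the optimal density-ratio critic `g(x,y) = p(x,y)/(pX x · pY y)`, the
contrastive loss `L_upper` whose denominator ranges only over the `W − 1`
i.i.d. negative samples satisfies `I ≤ log (W − 1) − L_upper`. -/
theorem contrastive_upper_bound_sharp
    {X Y : Type*} [Fintype X] [Fintype Y] [Nonempty X] [Nonempty Y]
    (p : X × Y → ℝ)
    (hp_pos : ∀ xy : X × Y, 0 < p xy)
    (hp_sum : ∑ xy : X × Y, p xy = 1)
    (pX : X → ℝ) (hpX : ∀ x, pX x = ∑ y, p (x, y))
    (pY : Y → ℝ) (hpY : ∀ y, pY y = ∑ x, p (x, y))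
    (I : ℝ)
    (hI : I = ∑ x, ∑ y, p (x, y) * Real.log (p (x, y) / (pX x * pY y)))
    (g : X × Y → ℝ)
    (hg : ∀ x y, g (x, y) = p (x, y) / (pX x * pY y))
    (W : ℕ) (hW : 2 ≤ W)
    (Lupper : ℝ)
    (hLupper : Lupper = - ∑ x, ∑ ypos, p (x, ypos) *
        ∑ ys : Fin (W - 1) → Y, (∏ j, pY (ys j)) *
          Real.log (g (x, ypos) / ∑ j, g (x, ys j))) :
    I ≤ Real.log ((W : ℝ) - 1) - Lupper := by
  have hpX_pos : ∀ x, 0 < pX x := fun x => hpX x ▸ sum_pos (fun y _ => hp_pos (x, y)) univ_nonempty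
  have hpY_pos : ∀ y, 0 < pY y := fun y => hpY y ▸ sum_pos (fun x _ => hp_pos (x, y)) univ_nonempty
  have hpX_sum : ∑ x, pX x = 1 := by simp only [hpX, ← Fintype.sum_prod_type, hp_sum]
  have hpY_sum : ∑ y, pY y = 1 := by
    simp only [hpY]; rw [sum_comm, ← Fintype.sum_prod_type, hp_sum]
  have hg_pos : ∀ x y, 0 < g (x, y) := fun x y =>
    hg x y ▸ div_pos (hp_pos _) (mul_pos (hpX_pos x) (hpY_pos y))
  have : Nonempty (Fin (W - 1)) := ⟨⟨0, by omega⟩⟩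
  have hS_pos : ∀ x (ys : Fin (W - 1) → Y), 0 < ∑ j, g (x, ys j) := fun x ys =>
    sum_pos (fun j _ => hg_pos x (ys j)) univ_nonempty
  have hprod_sum := sum_pi_prod_eq_one (ι := Fin (W - 1)) pY hpY_sum
  set T := fun x => ∑ ys : Fin (W - 1) → Y, (∏ j, pY (ys j)) * log (∑ j, g (x, ys j))
  have hT : ∀ x, T x ≤ log (W - 1) := fun x => by
    have hg_mean : ∑ y, pY y * g (x, y) = 1 := by
      simp only [hg]
      exact sum_mul_density_ratio_eq_one p pX pY x (hpX x) (hpX_pos x).ne' fun y => (hpY_pos y).ne'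
    have := sum_pi_prod_mul_log_sum_le (ι := Fin (W - 1)) pY (fun y => (hpY_pos y).le) hpY_sum
      (hg_pos x)
    rwa [hg_mean, Fintype.card_fin, Nat.cast_sub (by omega), Nat.cast_one, mul_one] at this
  have hsplit : ∀ x y, ∑ ys : Fin (W - 1) → Y, (∏ j, pY (ys j)) *
      log (g (x, y) / ∑ j, g (x, ys j)) = log (p (x, y) / (pX x * pY y)) - T x := fun x y => by
    rw [sum_mul_log_div _ _ hprod_sum (hg_pos x y) (hS_pos x), hg x y]
  have hL : Lupper = -I + ∑ x, pX x * T x := by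
    simp only [hLupper, hI, hsplit, mul_sub, sum_sub_distrib, ← sum_mul, ← hpX]
    ring
  linarith [sum_mul_le_of_forall_le pX T (fun x => (hpX_pos x).le) hpX_sum hT]
end

section
/- Let X, Y, Z be nonempty finite types and let p be a strictly positive probability mass function on X × Y × Z, regarded as the joint distribution of a triple of random variables (the task embedding c_pos, the context c_{1:i} of the first i transitions, and the context c_{1:i−1} of the first i−1 transitions). Let I(X;Y) and I(X;Z) denote the mutual informations computed from the corresponding two-dimensional marginals of p, and let g_Y(x,y) = p_{XY}(x,y)/(p_X(x)·p_Y(y)) and g_Z(x,z) = p_{XZ}(x,z)/(p_X(x)·p_Z(z)) be the density-ratio critics. Fix W ≥ 2 and define L_lower = − Σ_{x,y₁} p_{XY}(x,y₁) Σ_{y₂,…,y_W} (∏_{j=2}^{W} p_Y(y_j)) · log( g_Y(x,y₁) / Σ_{j=1}^{W} g_Y(x,y_j) ) and L_upper = − Σ_{x,z⁺} p_{XZ}(x,z⁺) Σ_{z₁,…,z_{W−1}} (∏_{j=1}^{W−1} p_Z(z_j)) · log( g_Z(x,z⁺) / Σ_{j=1}^{W−1} g_Z(x,z_j) ). Then I(X;Y)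 − I(X;Z) ≥ L_upper − L_lower. -/
/-!
With `K = W - 1` and `log (g / D) = log g - log D`, the sum `I(X;Y) + L_lower` becomes the
`p_X`-average of `E log (g(x,y₁) + ∑ⱼ g(x,yⱼ))`, where the sample `(y₁, …, y_W)` is i.i.d. `p_Y`
tilted by `g(x,y₁)`, and `I(X;Z) + L_upper` becomes the average of `E log ∑ⱼ g(x,zⱼ)` over
i.i.d. `p_Z` samples. Since `E_{p_Z} g(x,·) = 1`, Jensen bounds the latter by `log K`. For the
former, exchangeability of the untilted sample gives `E[g(x,y₁) / ∑ⱼ g(x,yⱼ)] = 1/W`, so Jensen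
for `log` at the reciprocals of the denominators bounds it below by `log W ≥ log K`.
-/

open Finset Real

section Averages

variable {ι : Type*} [Fintype ι] {w F : ι → ℝ} {c : ℝ}

theorem le_sum_mul_of_le (hw₀ : ∀ i, 0 ≤ w i) (hw : ∑ i, w i = 1) (hF : ∀ i, c ≤ F i) :
    c ≤ ∑ i, w i * F i :=
  calc c = ∑ i, w i * c := by rw [← sum_mul, hw, one_mul]
    _ ≤ ∑ i, w i * F i := sum_le_sum fun i _ => mul_le_mul_of_nonneg_left (hF i) (hw₀ i)

theorem sum_mul_le_of_le (hw₀ : ∀ i, 0 ≤ w i) (hw : ∑ i, w i = 1) (hF : ∀ i, F i ≤ c) :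
    ∑ i, w i * F i ≤ c :=
  calc ∑ i, w i * F i ≤ ∑ i, w i * c :=
        sum_le_sum fun i _ => mul_le_mul_of_nonneg_left (hF i) (hw₀ i)
    _ = c := by rw [← sum_mul, hw, one_mul]

theorem sum_mul_log_div_s4 {D : ι → ℝ} (hw : ∑ i, w i = 1) (hc : 0 < c) (hD : ∀ i, 0 < D i) :
    ∑ i, w i * log (c / D i) = log c - ∑ i, w i * log (D i) := by
  simp only [log_div hc.ne' (hD _).ne', mul_sub, sum_sub_distrib, ← sum_mul, hw, one_mul]

end Averages

section Exchangeable

variable {ι α : Type*} [Fintype ι] [DecidableEq ι] [Fintype α] {q g : α → ℝ}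

theorem sum_pi_prod_eq_one_s4 (hq : ∑ a, q a = 1) : ∑ xs : ι → α, ∏ j, q (xs j) = 1 := by
  rw [← Fintype.prod_sum]
  simp [hq]

theorem sum_pi_prod_mul_apply_s4 (hq : ∑ a, q a = 1) (f : α → ℝ) (i : ι) :
    ∑ xs : ι → α, (∏ j, q (xs j)) * f (xs i) = ∑ a, q a * f a := by
  have hsplit (xs : ι → α) :
      (∏ j, q (xs j)) * f (xs i) = ∏ j, q (xs j) * if j = i then f (xs j) else 1 := by
    rw [prod_mul_distrib, prod_ite_eq' univ i, if_pos (mem_univ i)]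
  simp_rw [hsplit]
  rw [← Fintype.prod_sum fun j a => q a * if j = i then f a else 1,
    prod_eq_single i (fun j _ hj => by simp [hj, hq]) (by simp)]
  simp

theorem sum_pi_prod_mul_div_sum (hq : ∑ a, q a = 1) (hg : ∀ a, 0 < g a) (i : ι) :
    ∑ xs : ι → α, (∏ j, q (xs j)) * (g (xs i) / ∑ j, g (xs j)) = (Fintype.card ι : ℝ)⁻¹ := by
  set A : ι → ℝ := fun i => ∑ xs : ι → α, (∏ j, q (xs j)) * (g (xs i) / ∑ j, g (xs j))
  have hS (xs : ι → α) : 0 < ∑ j, g (xs j) := sum_pos (fun j _ => hg _) ⟨i, mem_univ i⟩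
  -- relabelling the sample by the transposition `swap i k` is measure preserving
  have hA (k : ι) : A k = A i := by
    refine Fintype.sum_equiv (Equiv.arrowCongr (Equiv.swap i k) (Equiv.refl α)) _ _ fun xs => ?_
    simp only [Equiv.arrowCongr_apply, Equiv.symm_swap, Equiv.coe_refl, Function.comp_apply,
      id, Equiv.swap_apply_left]
    rw [Equiv.prod_comp (Equiv.swap i k) fun j => q (xs j),
      Equiv.sum_comp (Equiv.swap i k) fun j => g (xs j)]
  have htotal : ∑ k, A k = 1 := by
    simp only [A]
    rw [sum_comm]
    simp_rw [← mul_sum, ← sum_div, div_self (hS _).ne', mul_one]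
    exact sum_pi_prod_eq_one_s4 hq
  simp_rw [hA, sum_const, card_univ, nsmul_eq_mul] at htotal
  exact eq_inv_of_mul_eq_one_right htotal

theorem log_card_le_sum_pi_prod_mul_log_sum (hq₀ : ∀ a, 0 ≤ q a) (hq : ∑ a, q a = 1)
    (hg : ∀ a, 0 < g a) (hqg : ∑ a, q a * g a = 1) (i : ι) :
    log (Fintype.card ι) ≤ ∑ xs : ι → α, (∏ j, q (xs j)) * g (xs i) * log (∑ j, g (xs j)) := by
  have hS (xs : ι → α) : 0 < ∑ j, g (xs j) := sum_pos (fun j _ => hg _) ⟨i, mem_univ i⟩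
  have hjensen := strictConcaveOn_log_Ioi.concaveOn.le_map_sum
    (t := univ) (w := fun xs : ι → α => (∏ j, q (xs j)) * g (xs i))
    (p := fun xs => (∑ j, g (xs j))⁻¹)
    (fun xs _ => mul_nonneg (prod_nonneg fun j _ => hq₀ _) (hg _).le)
    ((sum_pi_prod_mul_apply_s4 hq g i).trans hqg) (fun xs _ => inv_pos.mpr (hS xs))
  simp only [smul_eq_mul, log_inv, mul_neg, sum_neg_distrib] at hjensen
  have hmean : ∑ xs : ι → α, (∏ j, q (xs j)) * g (xs i) * (∑ j, g (xs j))⁻¹ =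
      (Fintype.card ι : ℝ)⁻¹ := by
    simp_rw [mul_assoc, ← div_eq_mul_inv]
    exact sum_pi_prod_mul_div_sum hq hg i
  rw [hmean, log_inv] at hjensen
  linarith

theorem sum_pi_prod_mul_log_sum_le_log_card [Nonempty ι] (hq₀ : ∀ a, 0 ≤ q a)
    (hq : ∑ a, q a = 1) (hg : ∀ a, 0 < g a) (hqg : ∑ a, q a * g a = 1) :
    ∑ xs : ι → α, (∏ j, q (xs j)) * log (∑ j, g (xs j)) ≤ log (Fintype.card ι) := by
  have hjensen := strictConcaveOn_log_Ioi.concaveOn.le_map_sum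
    (t := univ) (w := fun xs : ι → α => ∏ j, q (xs j)) (p := fun xs => ∑ j, g (xs j))
    (fun xs _ => prod_nonneg fun j _ => hq₀ _) (sum_pi_prod_eq_one_s4 hq)
    (fun xs _ => sum_pos (fun j _ => hg _) univ_nonempty)
  have hmean : ∑ xs : ι → α, (∏ j, q (xs j)) * ∑ j, g (xs j) = Fintype.card ι := by
    simp_rw [mul_sum]
    rw [sum_comm]
    simp [sum_pi_prod_mul_apply_s4 hq g, hqg]
  simpa only [smul_eq_mul, hmean] using hjensen

end Exchangeable

theorem sum_pi_fin_succ {α : Type*} [Fintype α] {K : ℕ} (F : (Fin (K + 1) → α) → ℝ) :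
    ∑ xs, F xs = ∑ a, ∑ xs : Fin K → α, F (Fin.cons a xs) := by
  rw [← Fintype.sum_prod_type']
  exact (Fintype.sum_equiv (Fin.consEquiv fun _ => α) _ _ fun _ => rfl).symm

theorem log_add_one_le_sum_mul_sum_pi_prod_mul_log_add_sum {α : Type*} [Fintype α] {q g : α → ℝ}
    (hq₀ : ∀ a, 0 ≤ q a) (hq : ∑ a, q a = 1)
    (hg : ∀ a, 0 < g a) (hqg : ∑ a, q a * g a = 1) (K : ℕ) :
    log (K + 1) ≤
      ∑ a, q a * g a * ∑ xs : Fin K → α, (∏ j, q (xs j)) * log (g a + ∑ j, g (xs j)) := by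
  have h := log_card_le_sum_pi_prod_mul_log_sum (ι := Fin (K + 1)) hq₀ hq hg hqg 0
  simp only [Fintype.card_fin, Nat.cast_add, Nat.cast_one, sum_pi_fin_succ, Fin.prod_univ_succ,
    Fin.sum_univ_succ, Fin.cons_zero, Fin.cons_succ] at h
  simpa only [mul_sum, mul_assoc, mul_left_comm] using h

section JointPMF

variable {α β : Type*} [Fintype α] [Fintype β]

noncomputable def densityRatio (r : α × β → ℝ) (rA : α → ℝ) (rB : β → ℝ) (ab : α × β) : ℝ :=
  r ab / (rA ab.1 * rB ab.2)

noncomputable def mutualInfo (r : α × β → ℝ) (rA : α → ℝ) (rB : β → ℝ) : ℝ :=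
  ∑ a, ∑ b, r (a, b) * log (densityRatio r rA rB (a, b))

/-- The InfoNCE loss with critic `g` and `K` negatives drawn from `rB`. -/
noncomputable def infoNCELoss (r : α × β → ℝ) (rB : β → ℝ) (g : α × β → ℝ) (K : ℕ) : ℝ :=
  -∑ a, ∑ b, r (a, b) * ∑ bs : Fin K → β, (∏ j, rB (bs j)) *
    log (g (a, b) / (g (a, b) + ∑ j, g (a, bs j)))

/-- The paper's `L_upper`: as `infoNCELoss`, but the positive sample is left out of the
denominator. -/
noncomputable def exclusiveContrastiveLoss (r : α × β → ℝ) (rB : β → ℝ) (g : α × β → ℝ)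
    (K : ℕ) : ℝ :=
  -∑ a, ∑ b, r (a, b) * ∑ bs : Fin K → β, (∏ j, rB (bs j)) * log (g (a, b) / ∑ j, g (a, bs j))

structure IsPosJointPMF (r : α × β → ℝ) (rA : α → ℝ) (rB : β → ℝ) : Prop where
  pos : ∀ ab, 0 < r ab
  sum_sum_eq_one : ∑ a, ∑ b, r (a, b) = 1
  fst_eq_sum : ∀ a, rA a = ∑ b, r (a, b)
  snd_eq_sum : ∀ b, rB b = ∑ a, r (a, b)

namespace IsPosJointPMF

variable {r : α × β → ℝ} {rA : α → ℝ} {rB : β → ℝ}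

theorem of_marginal {γ : Type*} [Fintype γ] [Nonempty γ] (p : α → β → γ → ℝ)
    (hp : ∀ a b c, 0 < p a b c) (hp₁ : ∑ a, ∑ b, ∑ c, p a b c = 1)
    (hr : ∀ a b, r (a, b) = ∑ c, p a b c) (hrA : ∀ a, rA a = ∑ b, ∑ c, p a b c)
    (hrB : ∀ b, rB b = ∑ a, ∑ c, p a b c) : IsPosJointPMF r rA rB where
  pos ab := hr ab.1 ab.2 ▸ sum_pos (fun _ _ => hp _ _ _) univ_nonempty
  sum_sum_eq_one := by simpa only [hr] using hp₁
  fst_eq_sum a := by simp only [hrA, hr]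
  snd_eq_sum b := by simp only [hrB, hr]

theorem fst_pos [Nonempty β] (h : IsPosJointPMF r rA rB) (a : α) : 0 < rA a :=
  h.fst_eq_sum a ▸ sum_pos (fun _ _ => h.pos _) univ_nonempty

theorem snd_pos [Nonempty α] (h : IsPosJointPMF r rA rB) (b : β) : 0 < rB b :=
  h.snd_eq_sum b ▸ sum_pos (fun _ _ => h.pos _) univ_nonempty

theorem sum_fst (h : IsPosJointPMF r rA rB) : ∑ a, rA a = 1 := by
  simp only [h.fst_eq_sum, h.sum_sum_eq_one]

theorem sum_snd (h : IsPosJointPMF r rA rB) : ∑ b, rB b = 1 := by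
  simp only [h.snd_eq_sum]
  rw [sum_comm, h.sum_sum_eq_one]

variable [Nonempty α] [Nonempty β]

theorem densityRatio_pos (h : IsPosJointPMF r rA rB) (ab : α × β) :
    0 < densityRatio r rA rB ab :=
  div_pos (h.pos ab) (mul_pos (h.fst_pos _) (h.snd_pos _))

theorem apply_eq_mul_densityRatio (h : IsPosJointPMF r rA rB) (a : α) (b : β) :
    r (a, b) = rA a * (rB b * densityRatio r rA rB (a, b)) := by
  have := h.fst_pos a
  have := h.snd_pos b
  simp only [densityRatio]
  field_simp

theorem sum_snd_mul_densityRatio (h : IsPosJointPMF r rA rB) (a : α) :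
    ∑ b, rB b * densityRatio r rA rB (a, b) = 1 := by
  have := h.fst_pos a
  rw [← mul_right_inj' this.ne', mul_sum]
  simp only [← h.apply_eq_mul_densityRatio, mul_one]
  exact (h.fst_eq_sum a).symm

theorem sum_sum_mul_eq (h : IsPosJointPMF r rA rB) (F : α → β → ℝ) :
    ∑ a, ∑ b, r (a, b) * F a b =
      ∑ a, rA a * ∑ b, rB b * densityRatio r rA rB (a, b) * F a b := by
  simp only [h.apply_eq_mul_densityRatio, mul_sum, mul_assoc]

theorem log_add_one_sub_infoNCELoss_le_mutualInfo (h : IsPosJointPMF r rA rB) (K : ℕ) :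
    log (K + 1) - infoNCELoss r rB (densityRatio r rA rB) K ≤ mutualInfo r rA rB := by
  set g := densityRatio r rA rB
  have hid : mutualInfo r rA rB + infoNCELoss r rB g K = ∑ a, ∑ b, r (a, b) *
      ∑ bs : Fin K → β, (∏ j, rB (bs j)) * log (g (a, b) + ∑ j, g (a, bs j)) := by
    simp only [mutualInfo, infoNCELoss, ← sub_eq_add_neg, ← sum_sub_distrib, ← mul_sub]
    refine sum_congr rfl fun a _ => sum_congr rfl fun b _ => ?_
    rw [sum_mul_log_div_s4 (sum_pi_prod_eq_one_s4 h.sum_snd) (h.densityRatio_pos _)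
      fun bs => add_pos_of_pos_of_nonneg (h.densityRatio_pos _)
        (sum_nonneg fun j _ => (h.densityRatio_pos _).le)]
    ring
  have hbound (a : α) := log_add_one_le_sum_mul_sum_pi_prod_mul_log_add_sum
    (fun b => (h.snd_pos b).le) h.sum_snd (fun b => h.densityRatio_pos (a, b))
    (h.sum_snd_mul_densityRatio a) K
  rw [h.sum_sum_mul_eq] at hid
  linarith [le_sum_mul_of_le (fun a => (h.fst_pos a).le) h.sum_fst hbound]

theorem mutualInfo_le_log_sub_exclusiveContrastiveLoss (h : IsPosJointPMF r rA rB) {K : ℕ}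
    (hK : 0 < K) :
    mutualInfo r rA rB ≤ log K - exclusiveContrastiveLoss r rB (densityRatio r rA rB) K := by
  have : Nonempty (Fin K) := ⟨⟨0, hK⟩⟩
  set g := densityRatio r rA rB
  have hid : mutualInfo r rA rB + exclusiveContrastiveLoss r rB g K =
      ∑ a, rA a * ∑ bs : Fin K → β, (∏ j, rB (bs j)) * log (∑ j, g (a, bs j)) := by
    simp only [mutualInfo, exclusiveContrastiveLoss, ← sub_eq_add_neg, ← sum_sub_distrib,
      ← mul_sub, h.fst_eq_sum, sum_mul]
    refine sum_congr rfl fun a _ => sum_congr rfl fun b _ => ?_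
    rw [sum_mul_log_div_s4 (sum_pi_prod_eq_one_s4 h.sum_snd) (h.densityRatio_pos _)
      fun bs => sum_pos (fun j _ => h.densityRatio_pos _) univ_nonempty]
    ring
  have hbound (a : α) : ∑ bs : Fin K → β, (∏ j, rB (bs j)) * log (∑ j, g (a, bs j)) ≤ log K := by
    simpa using sum_pi_prod_mul_log_sum_le_log_card (ι := Fin K)
      (fun b => (h.snd_pos b).le) h.sum_snd (fun b => h.densityRatio_pos (a, b))
      (h.sum_snd_mul_densityRatio a)
  linarith [sum_mul_le_of_le (fun a => (h.fst_pos a).le) h.sum_fst hbound]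

end IsPosJointPMF

end JointPMF

/-- Proposition 2 of the paper: for a strictly positive joint
pmf on `X × Y × Z`, the information gain `I(X;Y) − I(X;Z)` is lower bounded
by `L_upper − L_lower`, where `L_lower` is the InfoNCE loss for `(X,Y)` with
the optimal critic (denominator over the positive plus `W − 1` negatives) and
`L_upper` is the contrastive loss for `(X,Z)` whose denominator ranges only
over the `W − 1` negatives. -/
theorem information_gain_lower_bound
    {X Y Z : Type*} [Fintype X] [Fintype Y] [Fintype Z]
    [Nonempty X] [Nonempty Y] [Nonempty Z]
    (p : X × Y × Z → ℝ)
    (hp_pos : ∀ a : X × Y × Z, 0 < p a)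
    (hp_sum : ∑ a : X × Y × Z, p a = 1)
    (pX : X → ℝ) (hpX : ∀ x, pX x = ∑ y, ∑ z, p (x, y, z))
    (pY : Y → ℝ) (hpY : ∀ y, pY y = ∑ x, ∑ z, p (x, y, z))
    (pZ : Z → ℝ) (hpZ : ∀ z, pZ z = ∑ x, ∑ y, p (x, y, z))
    (pXY : X × Y → ℝ) (hpXY : ∀ x y, pXY (x, y) = ∑ z, p (x, y, z))
    (pXZ : X × Z → ℝ) (hpXZ : ∀ x z, pXZ (x, z) = ∑ y, p (x, y, z))
    (IXY : ℝ)
    (hIXY : IXY = ∑ x, ∑ y, pXY (x, y) * Real.log (pXY (x, y) / (pX x * pY y)))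
    (IXZ : ℝ)
    (hIXZ : IXZ = ∑ x, ∑ z, pXZ (x, z) * Real.log (pXZ (x, z) / (pX x * pZ z)))
    (gY : X × Y → ℝ) (hgY : ∀ x y, gY (x, y) = pXY (x, y) / (pX x * pY y))
    (gZ : X × Z → ℝ) (hgZ : ∀ x z, gZ (x, z) = pXZ (x, z) / (pX x * pZ z))
    (W : ℕ) (hW : 2 ≤ W)
    (Llower : ℝ)
    (hLlower : Llower = - ∑ x, ∑ y₁, pXY (x, y₁) *
        ∑ ys : Fin (W - 1) → Y, (∏ j, pY (ys j)) *
          Real.log (gY (x, y₁) / (gY (x, y₁) + ∑ j, gY (x, ys j))))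
    (Lupper : ℝ)
    (hLupper : Lupper = - ∑ x, ∑ zpos, pXZ (x, zpos) *
        ∑ zs : Fin (W - 1) → Z, (∏ j, pZ (zs j)) *
          Real.log (gZ (x, zpos) / ∑ j, gZ (x, zs j))) :
    Lupper - Llower ≤ IXY - IXZ := by
  have hp_sum' : ∑ x, ∑ y, ∑ z, p (x, y, z) = 1 := by
    simpa only [Fintype.sum_prod_type] using hp_sum
  have hXY : IsPosJointPMF pXY pX pY :=
    IsPosJointPMF.of_marginal (fun x y z => p (x, y, z)) (fun _ _ _ => hp_pos _) hp_sum'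
      hpXY hpX hpY
  have hXZ : IsPosJointPMF pXZ pX pZ :=
    IsPosJointPMF.of_marginal (fun x z y => p (x, y, z)) (fun _ _ _ => hp_pos _)
      ((sum_congr rfl fun _ _ => sum_comm).trans hp_sum') hpXZ
      (fun x => (hpX x).trans sum_comm) hpZ
  obtain rfl : gY = densityRatio pXY pX pY := funext fun xy => hgY xy.1 xy.2
  obtain rfl : gZ = densityRatio pXZ pX pZ := funext fun xz => hgZ xz.1 xz.2
  have hlower := hXY.log_add_one_sub_infoNCELoss_le_mutualInfo (W - 1)
  have hupper := hXZ.mutualInfo_le_log_sub_exclusiveContrastiveLoss (K := W - 1) (by omega)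
  have hlog : log ((W - 1 : ℕ) : ℝ) ≤ log ((W - 1 : ℕ) + 1) :=
    log_le_log (by exact_mod_cast (by omega : 0 < W - 1)) (by linarith)
  have hgain : exclusiveContrastiveLoss pXZ pZ (densityRatio pXZ pX pZ) (W - 1)
      - infoNCELoss pXY pY (densityRatio pXY pX pY) (W - 1) ≤
      mutualInfo pXY pX pY - mutualInfo pXZ pX pZ := by
    linarith
  rw [hLupper, hLlower, hIXY, hIXZ]
  exact hgain
end
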